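/- (Minimum Angle Theorem, trace form.) Let X_C ∈ ℝ^{N×n} and Y_C ∈ ℝ^{N×m}. Suppose U ∈ ℝ^{N×z} satisfies UᵀU = I_z, X_C = U·F_X and Y_C = U·F_Y for F_X ∈ ℝ^{z×n}, F_Y ∈ ℝ^{z×m}; F_X = W·A where W ∈ ℝ^{z×n} has pairwise orthogonal nonzero columns w_1,…,w_n and A is an invertible n×n matrix; F_Y = V·B where V ∈ ℝ^{z×m} has pairwise orthogonal nonzero columns v_1,…,v_m and B is an invertible m×m matrix; and X_CᵀX_C and Y_CᵀY_C are invertible. Then tr((X_CᵀX_C)⁻¹ X_CᵀY_C (Y_CᵀY_C)⁻¹ Y_CᵀX_C) = Σ_{i=1}^{n} Σ_{j=1}^{m} (w_iᵀv_j)² / ((w_iᵀw_i)(v_jᵀv_j)). -/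

import Mathlib

/-!
The trace only sees the Gram matrices `XᵀX`, `YᵀY` and the cross matrices `XᵀY`, `YᵀX`.
These are unchanged when `X`, `Y` are multiplied on the left by `U` with `UᵀU = 1`, and when
`X`, `Y` are multiplied on the right by invertible `A`, `B` they change by congruence, which
only conjugates the matrix under the trace by `A`. So `X`, `Y` may be replaced by `W`, `V`, whose
Gram matrices are the diagonal matrices `diag (wᵢᵀwᵢ)`, `diag (vⱼᵀvⱼ)`, and the trace of
`diag(d)⁻¹ M diag(e)⁻¹ Mᵀ` with `M = WᵀV` is `∑ᵢ ∑ⱼ Mᵢⱼ² / (dᵢ eⱼ)`.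
-/

open Matrix

namespace Matrix

theorem transpose_mul_self_eq_diagonal {ι n R : Type*} [Fintype ι] [DecidableEq n]
    [CommSemiring R] {W : Matrix ι n R} (hW : ∀ i j, i ≠ j → Wᵀ i ⬝ᵥ Wᵀ j = 0) :
    Wᵀ * W = diagonal fun i => Wᵀ i ⬝ᵥ Wᵀ i := by
  ext i j
  rcases eq_or_ne i j with rfl | hij
  · rw [diagonal_apply_eq]
    rfl
  · rw [diagonal_apply_ne _ hij]
    exact hW i j hij

theorem transpose_mul_mul_of_transpose_mul_self_eq_one {ι κ m n R : Type*} [Fintype ι]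
    [Fintype κ] [DecidableEq κ] [CommSemiring R] {U : Matrix ι κ R} (hU : Uᵀ * U = 1)
    (P : Matrix κ m R) (Q : Matrix κ n R) :
    (U * P)ᵀ * (U * Q) = Pᵀ * Q := by
  rw [transpose_mul, Matrix.mul_assoc, ← Matrix.mul_assoc Uᵀ, hU, Matrix.one_mul]

theorem transpose_mul_mul_mul_mul {ι m n p q R : Type*} [Fintype ι] [Fintype m] [Fintype n]
    [CommSemiring R] (P : Matrix ι m R) (C : Matrix m p R) (Q : Matrix ι n R)
    (D : Matrix n q R) : (P * C)ᵀ * (Q * D) = Cᵀ * (Pᵀ * Q) * D := by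
  simp only [transpose_mul, Matrix.mul_assoc]

theorem inv_transpose_mul_mul {n R : Type*} [Fintype n] [DecidableEq n] [CommRing R]
    (C G : Matrix n n R) : (Cᵀ * G * C)⁻¹ = C⁻¹ * G⁻¹ * Cᵀ⁻¹ := by
  rw [mul_inv_rev, mul_inv_rev, Matrix.mul_assoc]

theorem inv_diagonal_of_ne_zero {n K : Type*} [Fintype n] [DecidableEq n] [Field K]
    {d : n → K} (hd : ∀ i, d i ≠ 0) : (diagonal d)⁻¹ = diagonal d⁻¹ := by
  refine inv_eq_left_inv ?_
  rw [diagonal_mul_diagonal, ← diagonal_one]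
  exact congrArg diagonal (funext fun i => inv_mul_cancel₀ (hd i))

theorem trace_diagonal_mul_diagonal_mul_transpose {n p R : Type*} [Fintype n] [Fintype p]
    [DecidableEq n] [DecidableEq p] [CommSemiring R] (d : n → R) (e : p → R) (M : Matrix n p R) :
    trace (diagonal d * M * diagonal e * Mᵀ) = ∑ i, ∑ j, d i * M i j ^ 2 * e j := by
  refine Finset.sum_congr rfl fun i _ => Finset.sum_congr rfl fun j _ => ?_
  simp only [mul_diagonal, diagonal_mul, transpose_apply]
  ring

end Matrix

section CanonicalCorrelation

variable {ι m n R : Type*} [Fintype ι] [Fintype m] [Fintype n] [DecidableEq m] [DecidableEq n]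

noncomputable def sumSqCanonicalCorr [CommRing R] (X : Matrix ι m R) (Y : Matrix ι n R) : R :=
  trace ((Xᵀ * X)⁻¹ * (Xᵀ * Y) * (Yᵀ * Y)⁻¹ * (Yᵀ * X))

theorem sumSqCanonicalCorr_isometry_mul {κ : Type*} [Fintype κ] [DecidableEq κ] [CommRing R]
    {U : Matrix ι κ R} (hU : Uᵀ * U = 1) (X : Matrix κ m R) (Y : Matrix κ n R) :
    sumSqCanonicalCorr (U * X) (U * Y) = sumSqCanonicalCorr X Y := by
  simp only [sumSqCanonicalCorr, transpose_mul_mul_of_transpose_mul_self_eq_one hU]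

theorem sumSqCanonicalCorr_mul_isUnit [CommRing R] (X : Matrix ι m R) (Y : Matrix ι n R)
    {A : Matrix m m R} {B : Matrix n n R} (hA : IsUnit A) (hB : IsUnit B) :
    sumSqCanonicalCorr (X * A) (Y * B) = sumSqCanonicalCorr X Y := by
  have hAd : IsUnit A.det := (isUnit_iff_isUnit_det A).mp hA
  have hBd : IsUnit B.det := (isUnit_iff_isUnit_det B).mp hB
  have hATd : IsUnit Aᵀ.det := by rwa [det_transpose]
  have hBTd : IsUnit Bᵀ.det := by rwa [det_transpose]
  simp only [sumSqCanonicalCorr, transpose_mul_mul_mul_mul, inv_transpose_mul_mul]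
  simp only [Matrix.mul_assoc, nonsing_inv_mul_cancel_left _ _ hATd,
    mul_nonsing_inv_cancel_left _ _ hBd, nonsing_inv_mul_cancel_left _ _ hBTd]
  rw [trace_mul_comm]
  simp only [← Matrix.mul_assoc, mul_nonsing_inv_cancel_right _ _ hAd]

theorem sumSqCanonicalCorr_of_transpose_mul_self_eq_diagonal {K : Type*} [Field K]
    {X : Matrix ι m K} {Y : Matrix ι n K} {d : m → K} {e : n → K}
    (hX : Xᵀ * X = diagonal d) (hY : Yᵀ * Y = diagonal e) (hd : ∀ i, d i ≠ 0)
    (he : ∀ j, e j ≠ 0) :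
    sumSqCanonicalCorr X Y = ∑ i, ∑ j, (Xᵀ i ⬝ᵥ Yᵀ j) ^ 2 / (d i * e j) := by
  rw [sumSqCanonicalCorr, hX, hY, inv_diagonal_of_ne_zero hd, inv_diagonal_of_ne_zero he,
    ← transpose_transpose (Yᵀ * X), transpose_mul, transpose_transpose,
    trace_diagonal_mul_diagonal_mul_transpose]
  refine Finset.sum_congr rfl fun i _ => Finset.sum_congr rfl fun j _ => ?_
  rw [Pi.inv_apply, Pi.inv_apply, div_eq_mul_inv, mul_inv]
  change _ * (Xᵀ i ⬝ᵥ Yᵀ j) ^ 2 * _ = _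
  ring

end CanonicalCorrelation

theorem minimum_angle_general {N z n m : ℕ}
    (X : Matrix (Fin N) (Fin n) ℝ) (Y : Matrix (Fin N) (Fin m) ℝ)
    (U : Matrix (Fin N) (Fin z) ℝ) (hU : Uᵀ * U = 1)
    (FX : Matrix (Fin z) (Fin n) ℝ) (FY : Matrix (Fin z) (Fin m) ℝ)
    (hX : X = U * FX) (hY : Y = U * FY)
    (W : Matrix (Fin z) (Fin n) ℝ) (A : Matrix (Fin n) (Fin n) ℝ) (hA : IsUnit A)
    (hFX : FX = W * A)
    (V : Matrix (Fin z) (Fin m) ℝ) (B : Matrix (Fin m) (Fin m) ℝ) (hB : IsUnit B)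
    (hFY : FY = V * B)
    (hWorth : ∀ i j : Fin n, i ≠ j → Wᵀ i ⬝ᵥ Wᵀ j = 0) (hWne : ∀ i : Fin n, Wᵀ i ≠ 0)
    (hVorth : ∀ i j : Fin m, i ≠ j → Vᵀ i ⬝ᵥ Vᵀ j = 0) (hVne : ∀ j : Fin m, Vᵀ j ≠ 0) :
    trace ((Xᵀ * X)⁻¹ * Xᵀ * Y * (Yᵀ * Y)⁻¹ * Yᵀ * X)
      = ∑ i : Fin n, ∑ j : Fin m,
          (Wᵀ i ⬝ᵥ Vᵀ j) ^ 2 / ((Wᵀ i ⬝ᵥ Wᵀ i) * (Vᵀ j ⬝ᵥ Vᵀ j)) := by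
  subst hX hY hFX hFY
  calc _ = sumSqCanonicalCorr (U * (W * A)) (U * (V * B)) := by
          simp only [sumSqCanonicalCorr, Matrix.mul_assoc]
    _ = sumSqCanonicalCorr W V := by
          rw [sumSqCanonicalCorr_isometry_mul hU, sumSqCanonicalCorr_mul_isUnit W V hA hB]
    _ = _ := sumSqCanonicalCorr_of_transpose_mul_self_eq_diagonal
          (transpose_mul_self_eq_diagonal hWorth) (transpose_mul_self_eq_diagonal hVorth)
          (fun i => mt dotProduct_self_eq_zero.mp (hWne i))
          (fun j => mt dotProduct_self_eq_zero.mp (hVne j))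

/-- Minimum Angle Theorem (trace form): the sum of squared canonical correlation coefficients
decomposes as a double sum of squared cosines (θ-angles) between the orthogonal basis columns
of the coordinate matrices. -/
theorem minimum_angle {N z n m : ℕ}
    (X : Matrix (Fin N) (Fin n) ℝ) (Y : Matrix (Fin N) (Fin m) ℝ)
    (U : Matrix (Fin N) (Fin z) ℝ) (hU : Uᵀ * U = 1)
    (FX : Matrix (Fin z) (Fin n) ℝ) (FY : Matrix (Fin z) (Fin m) ℝ)
    (hX : X = U * FX) (hY : Y = U * FY)
    (W : Matrix (Fin z) (Fin n) ℝ) (A : Matrix (Fin n) (Fin n) ℝ) (hA : IsUnit A)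
    (hFX : FX = W * A)
    (V : Matrix (Fin z) (Fin m) ℝ) (B : Matrix (Fin m) (Fin m) ℝ) (hB : IsUnit B)
    (hFY : FY = V * B)
    (hWorth : ∀ i j : Fin n, i ≠ j → Wᵀ i ⬝ᵥ Wᵀ j = 0) (hWne : ∀ i : Fin n, Wᵀ i ≠ 0)
    (hVorth : ∀ i j : Fin m, i ≠ j → Vᵀ i ⬝ᵥ Vᵀ j = 0) (hVne : ∀ j : Fin m, Vᵀ j ≠ 0)
    (hXX : IsUnit (Xᵀ * X)) (hYY : IsUnit (Yᵀ * Y)) :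
    trace ((Xᵀ * X)⁻¹ * Xᵀ * Y * (Yᵀ * Y)⁻¹ * Yᵀ * X)
      = ∑ i : Fin n, ∑ j : Fin m,
          (Wᵀ i ⬝ᵥ Vᵀ j) ^ 2 / ((Wᵀ i ⬝ᵥ Wᵀ i) * (Vᵀ j ⬝ᵥ Vᵀ j)) :=
  minimum_angle_general X Y U hU FX FY hX hY W A hA hFX V B hB hFY hWorth hWne hVorth hVne
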